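/- arXiv:2502.10909 — 2 statements merged into one kernel-verified Lean document; each statement's English description precedes it below -/
import Mathlib

section
/- Let G = (V, A) be a finite directed graph with minimum feedback arc set F of size opt, and let V'' be the first j vertices in a topological ordering of the DAG (V, A \ F). Then the number of arcs of A from V \ V'' to V'' is at most opt, and moreover (minimum feedback arc set size of G[V'']) + (number of arcs from V \ V'' to V'') + (minimum feedback arc set size of G[V \ V'']) ≤ 2·opt, with the first and third terms together at most opt. -/
def DigraphAcyclic {V : Type*} [DecidableEq V] (B : Finset (V × V)) : Prop :=
  ∀ v : V, ¬ Relation.TransGen (fun u w => (u, w) ∈ B) v v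

def IsFeedbackArcSet {V : Type*} [DecidableEq V] (A F : Finset (V × V)) : Prop :=
  F ⊆ A ∧ DigraphAcyclic (A \ F)

def inducedArcs {V : Type*} [DecidableEq V] (A : Finset (V × V)) (V' : Finset V) :
    Finset (V × V) :=
  A.filter (fun p => p.1 ∈ V' ∧ p.2 ∈ V')

/-- Minimum size of a feedback arc set of the subgraph induced by `W`. -/
noncomputable def fasMin {V : Type*} [DecidableEq V] (A : Finset (V × V))
    (W : Finset V) : ℕ :=
  sInf {m : ℕ | ∃ F, IsFeedbackArcSet (inducedArcs A W) F ∧ F.card = m}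

lemma acyclic_mono {V : Type*} [DecidableEq V] {B C : Finset (V × V)}
    (h : B ⊆ C) (hC : DigraphAcyclic C) : DigraphAcyclic B := by
  intro v hv
  exact hC v (Relation.TransGen.mono (fun u w huw => h huw) v v hv)

lemma fasMin_le_induced {V : Type*} [DecidableEq V] (A F : Finset (V × V))
    (hF : IsFeedbackArcSet A F) (W : Finset V) :
    fasMin A W ≤ (inducedArcs F W).card := by
  apply Nat.sInf_le
  refine ⟨inducedArcs F W, ⟨?_, ?_⟩, rfl⟩
  · intro p hp
    simp only [inducedArcs, Finset.mem_filter] at hp ⊢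
    exact ⟨hF.1 hp.1, hp.2⟩
  · apply acyclic_mono (C := A \ F) _ hF.2
    intro p hp
    simp only [inducedArcs, Finset.mem_filter, Finset.mem_sdiff] at hp ⊢
    obtain ⟨⟨hpA, hW⟩, hnF⟩ := hp
    exact ⟨hpA, fun hpF => hnF ⟨hpF, hW⟩⟩

theorem stmt9 {V : Type*} [Fintype V] [DecidableEq V]
    (A F : Finset (V × V)) (n : ℕ) (hn : n = Fintype.card V)
    (hF : IsFeedbackArcSet A F)
    (hFmin : ∀ F', IsFeedbackArcSet A F' → F.card ≤ F'.card)
    (π : V ≃ Fin n)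
    -- `π` is a topological ordering of the DAG `(V, A \ F)`
    (htopo : ∀ p ∈ A \ F, (π p.1 : ℕ) < (π p.2 : ℕ))
    (j : ℕ) (hj1 : 1 ≤ j) (hjn : j ≤ n)
    (V'' : Finset V) (hV'' : V'' = Finset.univ.filter (fun v => (π v : ℕ) < j)) :
    (A.filter (fun p => p.1 ∉ V'' ∧ p.2 ∈ V'')).card ≤ F.card ∧
    fasMin A V'' + fasMin A (Finset.univ \ V'') ≤ F.card ∧
    fasMin A V'' + (A.filter (fun p => p.1 ∉ V'' ∧ p.2 ∈ V'')).card +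
        fasMin A (Finset.univ \ V'') ≤ 2 * F.card := by
  have h1 : (A.filter (fun p => p.1 ∉ V'' ∧ p.2 ∈ V'')).card ≤ F.card := by
    apply Finset.card_le_card
    intro p hp
    simp only [Finset.mem_filter] at hp
    obtain ⟨hpA, hp1, hp2⟩ := hp
    by_contra hpF
    have := htopo p (Finset.mem_sdiff.mpr ⟨hpA, hpF⟩)
    subst hV''
    simp only [Finset.mem_filter, Finset.mem_univ, true_and] at hp1 hp2
    exact hp1 (lt_trans this hp2)
  have h2 : fasMin A V'' + fasMin A (Finset.univ \ V'') ≤ F.card := by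
    calc fasMin A V'' + fasMin A (Finset.univ \ V'')
        ≤ (inducedArcs F V'').card + (inducedArcs F (Finset.univ \ V'')).card :=
          Nat.add_le_add (fasMin_le_induced A F hF V'')
            (fasMin_le_induced A F hF (Finset.univ \ V''))
      _ = (inducedArcs F V'' ∪ inducedArcs F (Finset.univ \ V'')).card := by
          rw [Finset.card_union_of_disjoint]
          rw [Finset.disjoint_left]
          intro p hp hp'
          simp only [inducedArcs, Finset.mem_filter, Finset.mem_sdiff] at hp hp'
          exact hp'.2.1.2 hp.2.1
      _ ≤ F.card := Finset.card_le_card (by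
          intro p hp
          simp only [Finset.mem_union, inducedArcs, Finset.mem_filter] at hp
          rcases hp with h | h <;> exact h.1)
  exact ⟨h1, h2, by omega⟩
end

section
/- Let G = (V, A) be a directed graph, L ⊆ V with R = V \ L, and let A* be the set of arcs from R to L. Let π be an ordering placing all of L (in some order π_L) before all of R (in some order π_R). Then for every position i, |cut_π^i| ≤ max(cw_L, cw_R) + |A*|, where cw_L and cw_R are the maximum cut sizes of π_L in G[L] and of π_R in G[R] respectively. Consequently, if π_L and π_R are optimal cutwidth orderings and |A*| is at most the directed cutwidth of G, the ordering π certifies directed cutwidth at most 2 times the directed cutwidth of G. -/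
noncomputable def cutwidth {V : Type*} [DecidableEq V] (A : Finset (V × V))
    (W : Finset V) : ℕ :=
  sInf {m : ℕ | ∃ σ : V → ℕ, Set.InjOn σ W ∧
    ∀ i : ℕ,
      (A.filter (fun p => p.1 ∈ W ∧ p.2 ∈ W ∧ σ p.2 ≤ i ∧ i < σ p.1)).card ≤ m}

theorem stmt12 {V : Type*} [Fintype V] [DecidableEq V]
    (A : Finset (V × V)) (n : ℕ) (hn : n = Fintype.card V)
    (L : Finset V) (π : V ≃ Fin n)
    -- `π` places all of `L` before all of `R = V \ L`
    (hsplit : ∀ u ∈ L, ∀ v, v ∉ L → (π u : ℕ) < (π v : ℕ))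
    (cwL cwR : ℕ)
    -- every cut of `π` restricted to `G[L]` has size at most `cwL`
    (hcwL : ∀ i : ℕ,
      (A.filter (fun p => p.1 ∈ L ∧ p.2 ∈ L ∧
        (π p.2 : ℕ) < i ∧ i ≤ (π p.1 : ℕ))).card ≤ cwL)
    -- every cut of `π` restricted to `G[V \ L]` has size at most `cwR`
    (hcwR : ∀ i : ℕ,
      (A.filter (fun p => p.1 ∉ L ∧ p.2 ∉ L ∧
        (π p.2 : ℕ) < i ∧ i ≤ (π p.1 : ℕ))).card ≤ cwR) :
    (∀ i : ℕ,
      (A.filter (fun p => (π p.2 : ℕ) < i ∧ i ≤ (π p.1 : ℕ))).card ≤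
        max cwL cwR + (A.filter (fun p => p.1 ∉ L ∧ p.2 ∈ L)).card) ∧
    (cwL ≤ cutwidth A L → cwR ≤ cutwidth A (Finset.univ \ L) →
      (A.filter (fun p => p.1 ∉ L ∧ p.2 ∈ L)).card ≤ cutwidth A Finset.univ →
      ∀ i : ℕ,
        (A.filter (fun p => (π p.2 : ℕ) < i ∧ i ≤ (π p.1 : ℕ))).card ≤
          2 * cutwidth A Finset.univ) := by
  have hA : ∀ W : Finset V, (A.card : ℕ) ∈ {m : ℕ | ∃ σ : V → ℕ, Set.InjOn σ ↑W ∧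
      ∀ i : ℕ,
        (A.filter (fun p => p.1 ∈ W ∧ p.2 ∈ W ∧ σ p.2 ≤ i ∧ i < σ p.1)).card ≤ m} := by
    intro W
    refine ⟨fun v => (π v : ℕ), fun a _ b _ h => π.injective (Fin.val_injective h),
      fun i => Finset.card_le_card (Finset.filter_subset _ _)⟩
  have hmono : ∀ W W' : Finset V, W ⊆ W' → cutwidth A W ≤ cutwidth A W' := by
    intro W W' hWW'
    unfold cutwidth
    have hne : {m : ℕ | ∃ σ : V → ℕ, Set.InjOn σ ↑W' ∧
        ∀ i : ℕ,
          (A.filter (fun p => p.1 ∈ W' ∧ p.2 ∈ W' ∧ σ p.2 ≤ i ∧ i < σ p.1)).card ≤ m}.Nonempty :=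
      ⟨A.card, hA W'⟩
    obtain ⟨σ, hinj, hb⟩ := Nat.sInf_mem hne
    refine Nat.sInf_le ⟨σ, hinj.mono (Finset.coe_subset.mpr hWW'), fun i => ?_⟩
    refine le_trans (Finset.card_le_card ?_) (hb i)
    intro p hp
    simp only [Finset.mem_filter] at hp ⊢
    exact ⟨hp.1, hWW' hp.2.1, hWW' hp.2.2.1, hp.2.2.2⟩
  have main : ∀ i : ℕ, (A.filter (fun p => (π p.2 : ℕ) < i ∧ i ≤ (π p.1 : ℕ))).card ≤
      max cwL cwR + (A.filter (fun p => p.1 ∉ L ∧ p.2 ∈ L)).card := by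
    intro i
    set S := A.filter (fun p => (π p.2 : ℕ) < i ∧ i ≤ (π p.1 : ℕ)) with hSdef
    set LLS := A.filter (fun p : V × V => p.1 ∈ L ∧ p.2 ∈ L ∧ (π p.2 : ℕ) < i ∧ i ≤ (π p.1 : ℕ)) with hLLdef
    set RRS := A.filter (fun p : V × V => p.1 ∉ L ∧ p.2 ∉ L ∧ (π p.2 : ℕ) < i ∧ i ≤ (π p.1 : ℕ)) with hRRdef
    set XS := A.filter (fun p : V × V => p.1 ∉ L ∧ p.2 ∈ L) with hXdef
    have hsub : S ⊆ (LLS ∪ RRS) ∪ XS := by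
      intro p hp
      simp only [hSdef, hLLdef, hRRdef, hXdef, Finset.mem_filter, Finset.mem_union] at hp ⊢
      obtain ⟨hpA, h2, h1⟩ := hp
      by_cases h1L : p.1 ∈ L
      · by_cases h2L : p.2 ∈ L
        · exact Or.inl (Or.inl ⟨hpA, h1L, h2L, h2, h1⟩)
        · exact absurd (hsplit p.1 h1L p.2 h2L) (by omega)
      · by_cases h2L : p.2 ∈ L
        · exact Or.inr ⟨hpA, h1L, h2L⟩
        · exact Or.inl (Or.inr ⟨hpA, h1L, h2L, h2, h1⟩)
    have hLR : LLS.card + RRS.card ≤ max cwL cwR := by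
      rcases LLS.eq_empty_or_nonempty with h | h
      · rw [h]
        simpa using le_trans (hcwR i) (le_max_right cwL cwR)
      · rcases RRS.eq_empty_or_nonempty with h' | h'
        · rw [h']
          simpa using le_trans (hcwL i) (le_max_left cwL cwR)
        · exfalso
          obtain ⟨p, hp⟩ := h
          obtain ⟨q, hq⟩ := h'
          rw [hLLdef, Finset.mem_filter] at hp
          rw [hRRdef, Finset.mem_filter] at hq
          have := hsplit p.1 hp.2.1 q.2 hq.2.2.1
          omega
    calc S.card ≤ ((LLS ∪ RRS) ∪ XS).card := Finset.card_le_card hsub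
      _ ≤ (LLS ∪ RRS).card + XS.card := Finset.card_union_le _ _
      _ ≤ (LLS.card + RRS.card) + XS.card := add_le_add_left (Finset.card_union_le _ _) _
      _ ≤ max cwL cwR + XS.card := add_le_add_left hLR _
  refine ⟨main, fun h1 h2 h3 i => ?_⟩
  have hL : cutwidth A L ≤ cutwidth A Finset.univ := hmono L Finset.univ (Finset.subset_univ L)
  have hR : cutwidth A (Finset.univ \ L) ≤ cutwidth A Finset.univ :=
    hmono _ _ Finset.sdiff_subset
  calc (A.filter (fun p => (π p.2 : ℕ) < i ∧ i ≤ (π p.1 : ℕ))).card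
      ≤ max cwL cwR + (A.filter (fun p => p.1 ∉ L ∧ p.2 ∈ L)).card := main i
    _ ≤ cutwidth A Finset.univ + cutwidth A Finset.univ :=
        add_le_add (max_le (h1.trans hL) (h2.trans hR)) h3
    _ = 2 * cutwidth A Finset.univ := (two_mul _).symm
end
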